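/- Let W be a real k×n matrix of full rank k, and let P = (WWᵀ)^{1/2} be the unique symmetric positive definite square root of WWᵀ. Then P⁻¹ W A = W if and only if (W, P) is an equilibrium point of the synaptic ODE (i.e., P⁻¹WA = W and P⁻¹WAWᵀP⁻¹ = P). Equivalently, the gradient of the potential V, given by ∇V(W) = W − (WWᵀ)^{−1/2} W A, vanishes at a full-rank W if and only if (W, (WWᵀ)^{1/2}) is an equilibrium point. -/

import Mathlib

open Matrix
open scoped Matrix Classical

/-- The unique symmetric positive semidefinite square root of a positive semidefinite real
matrix (junk value `0` on matrices that are not positive semidefinite). -/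
noncomputable def msqrt {k : ℕ} (S : Matrix (Fin k) (Fin k) ℝ) : Matrix (Fin k) (Fin k) ℝ :=
  if h : S.PosSemidef then (h.1.eigenvectorUnitary : Matrix (Fin k) (Fin k) ℝ) *
    diagonal ((↑) ∘ (√·) ∘ h.1.eigenvalues) *
    (star h.1.eigenvectorUnitary : Matrix (Fin k) (Fin k) ℝ) else 0

/-- An equilibrium point of the synaptic ODE: a pair `(W, M)` with `M` symmetric positive
definite satisfying `M⁻¹WA = W` and `M⁻¹WAWᵀM⁻¹ = M`. -/
def IsEquilibrium {k n : ℕ} (A : Matrix (Fin n) (Fin n) ℝ)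
    (W : Matrix (Fin k) (Fin n) ℝ) (M : Matrix (Fin k) (Fin k) ℝ) : Prop :=
  M.PosDef ∧ M⁻¹ * W * A = W ∧ M⁻¹ * W * A * Wᵀ * M⁻¹ = M

/-!
Full rank makes `WWᵀ` positive definite, so `P = (WWᵀ)^{1/2}` is positive definite with
`P * P = WWᵀ`. Then `P⁻¹WA = W` already gives the second equilibrium equation:
`P⁻¹WAWᵀP⁻¹ = WWᵀP⁻¹ = P * P * P⁻¹ = P`.
-/

theorem Matrix.isUnit_of_rank_eq_card {K m : Type*} [Field K] [Fintype m] [DecidableEq m]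
    {S : Matrix m m K} (hS : S.rank = Fintype.card m) : IsUnit S := by
  rw [← mulVec_surjective_iff_isUnit, ← coe_mulVecLin, ← LinearMap.range_eq_top]
  apply Submodule.eq_top_of_finrank_eq
  rw [← Matrix.rank, hS, Module.finrank_fintype_fun_eq_card]

theorem Matrix.posDef_self_mul_transpose_of_rank_eq {m n : Type*} [Fintype m] [Fintype n]
    [DecidableEq m] {W : Matrix m n ℝ} (hW : W.rank = Fintype.card m) : (W * Wᵀ).PosDef := by
  have hsd : (W * Wᵀ).PosSemidef := by
    simpa using posSemidef_self_mul_conjTranspose W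
  exact hsd.posDef_iff_isUnit.mpr (isUnit_of_rank_eq_card (by rw [rank_self_mul_transpose, hW]))

section msqrt

variable {k : ℕ} {S : Matrix (Fin k) (Fin k) ℝ}

theorem msqrt_eq_cfc_sqrt (hS : S.PosSemidef) : msqrt S = cfc Real.sqrt S := by
  rw [msqrt, dif_pos hS, hS.1.cfc_eq, IsHermitian.cfc, Unitary.conjStarAlgAut_apply]
  rfl

theorem msqrt_mul_msqrt (hS : S.PosSemidef) : msqrt S * msqrt S = S := by
  have hspec : ∀ x ∈ spectrum ℝ S, √x * √x = x := fun x hx ↦ by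
    obtain ⟨i, rfl⟩ := hS.1.spectrum_real_eq_range_eigenvalues ▸ hx
    exact Real.mul_self_sqrt (hS.eigenvalues_nonneg i)
  rw [msqrt_eq_cfc_sqrt hS, ← cfc_mul .., cfc_congr hspec]
  exact cfc_id' ℝ S hS.1.isSelfAdjoint

theorem posSemidef_msqrt (hS : S.PosSemidef) : (msqrt S).PosSemidef := by
  rw [msqrt, dif_pos hS, star_eq_conjTranspose]
  exact (PosSemidef.diagonal fun i ↦ Real.sqrt_nonneg _).mul_mul_conjTranspose_same _

theorem posDef_msqrt (hS : S.PosDef) : (msqrt S).PosDef :=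
  (posSemidef_msqrt hS.posSemidef).posDef_iff_isUnit.mpr <|
    isUnit_of_mul_isUnit_left (msqrt_mul_msqrt hS.posSemidef ▸ hS.isUnit)

end msqrt

theorem isEquilibrium_iff_of_mul_self_eq {k n : ℕ} {A : Matrix (Fin n) (Fin n) ℝ}
    {W : Matrix (Fin k) (Fin n) ℝ} {M : Matrix (Fin k) (Fin k) ℝ} (hM : M.PosDef)
    (hMM : M * M = W * Wᵀ) : IsEquilibrium A W M ↔ M⁻¹ * W * A = W := by
  refine ⟨fun h ↦ h.2.1, fun h ↦ ⟨hM, h, ?_⟩⟩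
  calc M⁻¹ * W * A * Wᵀ * M⁻¹ = M * M * M⁻¹ := by rw [h, hMM]
    _ = M := mul_nonsing_inv_cancel_right _ _ hM.det_pos.ne'.isUnit

theorem gradient_zero_iff_equilibrium_general {k n : ℕ}
    (A : Matrix (Fin n) (Fin n) ℝ)
    (W : Matrix (Fin k) (Fin n) ℝ) (hW : W.rank = k) :
    ((msqrt (W * Wᵀ))⁻¹ * W * A = W ↔ IsEquilibrium A W (msqrt (W * Wᵀ))) ∧
    (W - (msqrt (W * Wᵀ))⁻¹ * W * A = 0 ↔ IsEquilibrium A W (msqrt (W * Wᵀ))) := by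
  have hS : (W * Wᵀ).PosDef :=
    posDef_self_mul_transpose_of_rank_eq (hW.trans (Fintype.card_fin k).symm)
  have hEq : IsEquilibrium A W (msqrt (W * Wᵀ)) ↔ (msqrt (W * Wᵀ))⁻¹ * W * A = W :=
    isEquilibrium_iff_of_mul_self_eq (posDef_msqrt hS) (msqrt_mul_msqrt hS.posSemidef)
  exact ⟨hEq.symm, by rw [sub_eq_zero, eq_comm, hEq]⟩

/-- For a full-rank `W` with `P = (WWᵀ)^{1/2}`: `P⁻¹WA = W` iff `(W, P)` is an
equilibrium point; equivalently, the gradient `∇V(W) = W − (WWᵀ)^{−1/2}WA` of the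
potential vanishes iff `(W, (WWᵀ)^{1/2})` is an equilibrium point. -/
theorem gradient_zero_iff_equilibrium {k n : ℕ} (hk : 0 < k) (hkn : k < n)
    (A : Matrix (Fin n) (Fin n) ℝ) (hA : A.PosDef)
    (W : Matrix (Fin k) (Fin n) ℝ) (hW : W.rank = k) :
    ((msqrt (W * Wᵀ))⁻¹ * W * A = W ↔ IsEquilibrium A W (msqrt (W * Wᵀ))) ∧
    (W - (msqrt (W * Wᵀ))⁻¹ * W * A = 0 ↔ IsEquilibrium A W (msqrt (W * Wᵀ))) :=
  gradient_zero_iff_equilibrium_general A W hW
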